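/- arXiv:1305.0085 — 5 statements merged into one kernel-verified Lean document; each statement's English description precedes it below -/
import Mathlib

section
/- Let F be a continuous, strictly increasing cumulative distribution function on [0,1] with F(0)=0, F(1)=1, let n ≥ 2, and let p_1,...,p_n ∈ (0,1) be prices with F(p_i) > 0 for all i. Then there exists a vector T = (T_1,...,T_n) ∈ ℝ^n such that T_i · ∏_{j ≠ i} F(T_j) = p_i for all i (an equilibrium of the posted-price public goods game on the complete graph). -/
/-!
In the coordinates `v i = -log F(T i) ≥ 0` the equilibrium conditions say that `v` solves a
nonlinear complementarity problem: `∑_{j ≠ i} v j + φ (v i) - b i` is nonnegative, and vanishes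
when `v i > 0`, where `b i = -log p i` and `φ v = -log F⁻¹(exp (-v))`. These are the first-order
conditions of the potential `∑_{i<j} v i v j + ∑ i (Φ (v i) - b i v i)` with `Φ' = φ` on the
orthant. As `φ → ∞`, a minimiser over a large box `[0, R]ⁿ` never sits on the far faces, so it is
such a solution.
-/

open Filter Function Set Topology

theorem IsMinOn.sub_mul_nonneg_of_hasDerivAt {g : ℝ → ℝ} {s : Set ℝ} {x y d : ℝ}
    (hmin : IsMinOn g s x) (hs : Convex ℝ s) (hg : HasDerivAt g d x) (hx : x ∈ s) (hy : y ∈ s) :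
    0 ≤ (y - x) * d := by
  simpa using hmin.localize.hasFDerivWithinAt_nonneg hg.hasFDerivAt.hasFDerivWithinAt
    (sub_mem_posTangentConeAt_of_segment_subset (hs.segment_subset hx hy))

section Complementarity

open Finset

variable {ι : Type*} [Fintype ι]

theorem Finset.sum_apply_update {α M : Type*} [AddCommMonoid M] [DecidableEq ι] (f : ι → α → M)
    (v : ι → α) (i : ι) (t : α) :
    ∑ j, f j (update v i t j) = f i t + ∑ j ∈ univ.erase i, f j (v j) := by
  simp only [apply_update f v i t, sum_update_of_mem (mem_univ i), sdiff_singleton_eq_erase]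

noncomputable def potential (Φ : ℝ → ℝ) (b w : ι → ℝ) : ℝ :=
  ((∑ i, w i) ^ 2 - ∑ i, w i ^ 2) / 2 + ∑ i, (Φ (w i) - b i * w i)

theorem continuous_potential {Φ : ℝ → ℝ} (hΦ : Continuous Φ) (b : ι → ℝ) :
    Continuous (potential Φ b) := by
  unfold potential
  fun_prop

theorem potential_update [DecidableEq ι] (Φ : ℝ → ℝ) (b v : ι → ℝ) (i : ι) (t : ℝ) :
    potential Φ b (update v i t) = (∑ j ∈ univ.erase i, v j - b i) * t + Φ t +
      (((∑ j ∈ univ.erase i, v j) ^ 2 - ∑ j ∈ univ.erase i, v j ^ 2) / 2 +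
        ∑ j ∈ univ.erase i, (Φ (v j) - b j * v j)) := by
  simp only [potential, sum_apply_update (fun _ x ↦ x), sum_apply_update (fun _ x ↦ x ^ 2),
    sum_apply_update (fun j x ↦ Φ x - b j * x)]
  ring

theorem hasDerivAt_potential_update [DecidableEq ι] {Φ φ : ℝ → ℝ}
    (hΦ : ∀ t, HasDerivAt Φ (φ t) t) (b v : ι → ℝ) (i : ι) (t : ℝ) :
    HasDerivAt (fun s ↦ potential Φ b (update v i s)) (∑ j ∈ univ.erase i, v j + φ t - b i) t := by
  simp only [potential_update]
  exact ((((hasDerivAt_id' t).const_mul _).add (hΦ t)).add_const _).congr_deriv (by ring)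

theorem exists_nonneg_complementarity [DecidableEq ι] {φ : ℝ → ℝ} (hφ : Continuous φ)
    (hφ_top : Tendsto φ atTop atTop) (b : ι → ℝ) :
    ∃ v : ι → ℝ, 0 ≤ v ∧ ∀ i, b i ≤ ∑ j ∈ univ.erase i, v j + φ (v i) ∧
      (0 < v i → ∑ j ∈ univ.erase i, v j + φ (v i) = b i) := by
  obtain ⟨R, hR, hRb⟩ : ∃ R, 0 ≤ R ∧ ∀ i, b i ≤ φ R :=
    ((eventually_ge_atTop 0).and (eventually_all.2 fun i ↦ hφ_top.eventually_ge_atTop (b i))).exists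
  set Φ : ℝ → ℝ := fun t ↦ ∫ s in (0)..t, φ s
  have hΦ : ∀ t, HasDerivAt Φ (φ t) t := fun t ↦ (hφ.integral_hasStrictDerivAt 0 t).hasDerivAt
  have hΦc : Continuous Φ := continuous_iff_continuousAt.2 fun t ↦ (hΦ t).continuousAt
  obtain ⟨v, hv, hmin⟩ := (isCompact_Icc (a := (0 : ι → ℝ)) (b := fun _ ↦ R)).exists_isMinOn
    ⟨0, le_rfl, fun _ ↦ hR⟩ (continuous_potential hΦc b).continuousOn
  refine ⟨v, hv.1, fun i ↦ ?_⟩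
  have hvi : v i ∈ Icc 0 R := ⟨hv.1 i, hv.2 i⟩
  have hcoord : IsMinOn (fun t ↦ potential Φ b (update v i t)) (Icc 0 R) (v i) := by
    intro t ht
    have hmem : update v i t ∈ Icc 0 (fun _ ↦ R) := by
      rw [← pi_univ_Icc] at hv ⊢
      exact (update_mem_pi_iff_of_mem hv).2 fun _ ↦ ht
    simpa using hmin hmem
  have hfoc : ∀ t ∈ Icc 0 R, 0 ≤ (t - v i) * (∑ j ∈ univ.erase i, v j + φ (v i) - b i) :=
    fun t ↦ hcoord.sub_mul_nonneg_of_hasDerivAt (convex_Icc 0 R)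
      (hasDerivAt_potential_update hΦ b v i (v i)) hvi
  have hσ : 0 ≤ ∑ j ∈ univ.erase i, v j := sum_nonneg fun j _ ↦ hv.1 j
  have hge : b i ≤ ∑ j ∈ univ.erase i, v j + φ (v i) := by
    rcases hvi.2.lt_or_eq with hlt | heq
    · nlinarith [hfoc R ⟨hR, le_rfl⟩]
    · rw [heq]
      linarith [hRb i]
  exact ⟨hge, fun hpos ↦ by nlinarith [hfoc 0 ⟨le_rfl, hR⟩]⟩

end Complementarity

theorem StrictMonoOn.exists_orderIso_eqOn_Icc {F : ℝ → ℝ} (hmono : StrictMonoOn F (Icc 0 1))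
    (hcont : ContinuousOn F (Icc 0 1)) (hF0 : F 0 = 0) (hF1 : F 1 = 1) :
    ∃ e : ℝ ≃o ℝ, EqOn e F (Icc 0 1) := by
  set c : ℝ → ℝ := fun t ↦ max 0 (min t 1)
  have hc : ∀ t, c t ∈ Icc 0 1 := fun t ↦ ⟨le_max_left _ _, max_le zero_le_one (min_le_right _ _)⟩
  have hc_mono : Monotone c := fun s t hst ↦ max_le_max le_rfl (min_le_min hst le_rfl)
  have hc_lip : ∀ s t, s ≤ t → c t - c s ≤ t - s := by
    intro s t hst
    simp only [c, min_def, max_def]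
    split_ifs <;> linarith
  set f : ℝ → ℝ := fun t ↦ F (c t) + (t - c t)
  have hf_mono : StrictMono f := by
    intro s t hst
    rcases (hc_mono hst.le).lt_or_eq with hlt | heq
    · have := hmono (hc s) (hc t) hlt
      have := hc_lip s t hst.le
      simp only [f]
      linarith
    · simp only [f, heq]
      linarith
  have hf_cont : Continuous f :=
    (hcont.comp_continuous (by fun_prop) hc).add (continuous_id.sub (by fun_prop))
  have hf_top : f =ᶠ[atTop] id := (eventually_ge_atTop 1).mono fun t ht ↦ by
    simp [f, c, ht, hF1]
  have hf_bot : f =ᶠ[atBot] id := (eventually_le_atBot 0).mono fun t ht ↦ by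
    simp [f, c, ht, hF0, ht.trans zero_le_one]
  refine ⟨hf_mono.orderIsoOfSurjective f (hf_cont.surjective
    (tendsto_id.congr' hf_top.symm) (tendsto_id.congr' hf_bot.symm)), fun t ht ↦ ?_⟩
  simp [f, c, ht.1, ht.2]

namespace OrderIso

variable (e : ℝ ≃o ℝ)

noncomputable def negLogSymmExpNeg (s : ℝ) : ℝ :=
  -Real.log (e.symm (Real.exp (-s)))

theorem symm_pos_of_pos (he : e 0 = 0) {y : ℝ} (hy : 0 < y) : 0 < e.symm y :=
  e.lt_symm_apply.2 (by rwa [he])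

theorem continuous_negLogSymmExpNeg (he : e 0 = 0) : Continuous e.negLogSymmExpNeg :=
  ((e.symm.continuous.comp (by fun_prop)).log
    fun s ↦ (e.symm_pos_of_pos he (Real.exp_pos (-s))).ne').neg

theorem tendsto_negLogSymmExpNeg (he : e 0 = 0) : Tendsto e.negLogSymmExpNeg atTop atTop := by
  have hsymm : Tendsto e.symm (𝓝[>] 0) (𝓝[>] 0) := by
    have h0 : e.symm 0 = 0 := by rw [e.symm_apply_eq, he]
    refine tendsto_nhdsWithin_iff.2 ⟨?_, eventually_nhdsWithin_of_forall fun y hy ↦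
      e.symm_pos_of_pos he hy⟩
    simpa [h0] using (e.symm.continuous.tendsto 0).mono_left nhdsWithin_le_nhds
  exact tendsto_neg_atBot_atTop.comp (Real.tendsto_log_nhdsGT_zero.comp
    (hsymm.comp (Real.tendsto_exp_atBot_nhdsGT.comp tendsto_neg_atTop_atBot)))

end OrderIso

theorem apply_exp_eq_exp_neg_of_complementarity {F : ℝ → ℝ} {e : ℝ ≃o ℝ}
    (he : EqOn e F (Icc 0 1)) (he0 : e 0 = 0) (hF1 : ∀ x : ℝ, 1 ≤ x → F x = 1) {σ b v : ℝ}
    (hv : 0 ≤ v) (hge : b ≤ σ + e.negLogSymmExpNeg v)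
    (heq : 0 < v → σ + e.negLogSymmExpNeg v = b) :
    F (Real.exp (σ - b)) = Real.exp (-v) := by
  have he1 : e 1 = 1 := (he ⟨zero_le_one, le_rfl⟩).trans (hF1 1 le_rfl)
  rcases hv.lt_or_eq with hpos | rfl
  · have hy := e.symm_pos_of_pos he0 (Real.exp_pos (-v))
    have hT : Real.exp (σ - b) = e.symm (Real.exp (-v)) := by
      rw [← Real.exp_log hy]
      have := heq hpos
      rw [OrderIso.negLogSymmExpNeg] at this
      congr 1
      linarith
    have hle : e.symm (Real.exp (-v)) ≤ 1 :=
      e.symm_apply_le.2 (by rw [he1]; exact Real.exp_le_one_iff.2 (by linarith))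
    rw [hT, ← he ⟨hy.le, hle⟩, e.apply_symm_apply]
  · have hφ0 : e.negLogSymmExpNeg 0 = 0 := by
      simp [OrderIso.negLogSymmExpNeg, e.symm_apply_eq.2 he1.symm]
    rw [neg_zero, Real.exp_zero]
    exact hF1 _ (Real.one_le_exp (by linarith))

theorem stmt_0_general (F : ℝ → ℝ) (hcont : Continuous F)
    (hmono : StrictMonoOn F (Set.Icc (0:ℝ) 1))
    (hF0 : F 0 = 0) (hF1 : ∀ x : ℝ, 1 ≤ x → F x = 1)
    (n : ℕ) (p : Fin n → ℝ)
    (hp : ∀ i, p i ∈ Set.Ioo (0:ℝ) 1) :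
    ∃ T : Fin n → ℝ, ∀ i,
      T i * ∏ j ∈ Finset.univ.erase i, F (T j) = p i := by
  obtain ⟨e, he⟩ := hmono.exists_orderIso_eqOn_Icc hcont.continuousOn hF0 (hF1 1 le_rfl)
  have he0 : e 0 = 0 := (he ⟨le_rfl, zero_le_one⟩).trans hF0
  set b : Fin n → ℝ := fun i ↦ -Real.log (p i)
  obtain ⟨v, hv, hcomp⟩ := exists_nonneg_complementarity (e.continuous_negLogSymmExpNeg he0)
    (e.tendsto_negLogSymmExpNeg he0) b
  refine ⟨fun i ↦ Real.exp (∑ j ∈ Finset.univ.erase i, v j - b i), fun i ↦ ?_⟩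
  have hF : ∀ j, F (Real.exp (∑ k ∈ Finset.univ.erase j, v k - b j)) = Real.exp (-v j) :=
    fun j ↦ apply_exp_eq_exp_neg_of_complementarity he he0 hF1 (hv j) (hcomp j).1 (hcomp j).2
  rw [Finset.prod_congr rfl fun j _ ↦ hF j, ← Real.exp_sum, ← Real.exp_add, Finset.sum_neg_distrib,
    ← sub_eq_add_neg, sub_sub_cancel_left, neg_neg, Real.exp_log (hp i).1]

/-- Existence of an equilibrium of the posted-price public goods game on
the complete graph. -/
theorem stmt_0 (F : ℝ → ℝ) (hcont : Continuous F)
    (hmono : StrictMonoOn F (Set.Icc (0:ℝ) 1))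
    (hF0 : F 0 = 0) (hF1 : ∀ x : ℝ, 1 ≤ x → F x = 1)
    (n : ℕ) (hn : 2 ≤ n) (p : Fin n → ℝ)
    (hp : ∀ i, p i ∈ Set.Ioo (0:ℝ) 1)
    (hFp : ∀ i, 0 < F (p i)) :
    ∃ T : Fin n → ℝ, ∀ i,
      T i * ∏ j ∈ Finset.univ.erase i, F (T j) = p i :=
  stmt_0_general F hcont hmono hF0 hF1 n p hp
end

section
/- Let G be a graph on vertex set V with |V| = n, and let X ⊆ [0,1]^V be the set of vectors x satisfying: ∑_{j∈N(i)∪{i}} x_j ≥ 1 for all i, and (∑_{j∈N(i)∪{i}} x_j > 1 ⟹ x_i = 0) for all i. Let W(p) denote the worst-case revenue inf_{x∈X} p·∑_i (1 − exp(−x_i·log(1/p))). Then for all p ∈ (0,1): p·(1−p)·inf_{x∈X} ∑_i x_i ≤ W(p) ≤ p·log(1/p)·inf_{x∈X} ∑_i x_i. Consequently, W(1/2) ≥ (1/4)·inf_{x∈X} ∑_i x_i ≥ (e/4)·sup_{p∈(0,1)} W(p). -/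
private lemma chord_exp (L t : ℝ) (hL : 0 < L) (ht0 : 0 ≤ t) (htL : t ≤ L) :
    (1 - Real.exp (-L)) * (t / L) ≤ 1 - Real.exp (-t) := by
  have hs0 : 0 ≤ t / L := div_nonneg ht0 hL.le
  have hs1 : t / L ≤ 1 := (div_le_one hL).2 htL
  have h := convexOn_exp.2 (Set.mem_univ (0:ℝ)) (Set.mem_univ (-L))
    (by linarith : (0:ℝ) ≤ 1 - t/L) hs0 (by ring)
  simp only [smul_eq_mul, mul_zero, zero_add, Real.exp_zero, mul_one] at h
  have he : (t / L) * (-L) = -t := by field_simp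
  rw [he] at h
  nlinarith

private lemma plogp_le (p : ℝ) (hp : 0 < p) :
    p * Real.log (1/p) ≤ (Real.exp 1)⁻¹ := by
  have he : (0:ℝ) < Real.exp 1 := Real.exp_pos 1
  have h1 : (0:ℝ) < 1 / (Real.exp 1 * p) := by positivity
  have h := Real.log_le_sub_one_of_pos h1
  have h2 : Real.log (1/p) = 1 + Real.log (1/(Real.exp 1 * p)) := by
    rw [one_div, one_div, Real.log_inv, Real.log_inv,
      Real.log_mul (ne_of_gt he) (ne_of_gt hp), Real.log_exp]
    ring
  rw [h2]
  calc p * (1 + Real.log (1/(Real.exp 1 * p)))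
      ≤ p * (1 + (1/(Real.exp 1 * p) - 1)) :=
        mul_le_mul_of_nonneg_left (by linarith) hp.le
    _ = (Real.exp 1)⁻¹ := by field_simp; ring

/-- Theorem 13: for i.i.d. uniform valuations on an arbitrary graph, the
worst-case revenue W(p) is sandwiched between p(1-p)·inf ∑x_i and
p·log(1/p)·inf ∑x_i; consequently the price 1/2 guarantees at least an e/4
fraction of the best worst-case revenue. -/
theorem stmt_13 {V : Type*} [Fintype V] [DecidableEq V]
    (G : SimpleGraph V) [DecidableRel G.Adj]
    (X : Set (V → ℝ))
    (hX : X = {x | (∀ i, x i ∈ Set.Icc (0:ℝ) 1)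
      ∧ (∀ i, 1 ≤ ∑ j ∈ insert i (G.neighborFinset i), x j)
      ∧ (∀ i, 1 < ∑ j ∈ insert i (G.neighborFinset i), x j → x i = 0)})
    (W : ℝ → ℝ)
    (hW : ∀ p, W p = sInf ((fun x : V → ℝ =>
      p * ∑ i, (1 - Real.exp (-(x i) * Real.log (1 / p)))) '' X)) :
    (∀ p ∈ Set.Ioo (0:ℝ) 1,
      p * (1 - p) * sInf ((fun x : V → ℝ => ∑ i, x i) '' X) ≤ W p
      ∧ W p ≤ p * Real.log (1 / p) * sInf ((fun x : V → ℝ => ∑ i, x i) '' X))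
    ∧ (1 / 4 : ℝ) * sInf ((fun x : V → ℝ => ∑ i, x i) '' X) ≤ W (1 / 2)
    ∧ (Real.exp 1 / 4) * sSup (W '' Set.Ioo 0 1)
        ≤ (1 / 4 : ℝ) * sInf ((fun x : V → ℝ => ∑ i, x i) '' X) := by
  set S := sInf ((fun x : V → ℝ => ∑ i, x i) '' X) with hSdef
  -- elements of X are in [0,1]
  have hx01 : ∀ x ∈ X, ∀ i, 0 ≤ x i ∧ x i ≤ 1 := by
    intro x hx i
    rw [hX] at hx
    exact ⟨(hx.1 i).1, (hx.1 i).2⟩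
  have hmain : ∀ p ∈ Set.Ioo (0:ℝ) 1,
      p * (1 - p) * S ≤ W p ∧ W p ≤ p * Real.log (1 / p) * S := by
    intro p hp
    obtain ⟨hp0, hp1⟩ := hp
    have hL : 0 < Real.log (1/p) := by
      rw [one_div, Real.log_inv]; linarith [Real.log_neg hp0 hp1]
    by_cases hXe : X.Nonempty
    · obtain ⟨x0, hx0⟩ := hXe
      -- abbreviations
      set f : (V → ℝ) → ℝ := fun x => p * ∑ i, (1 - Real.exp (-(x i) * Real.log (1 / p))) with hf
      set g : (V → ℝ) → ℝ := fun x => ∑ i, x i with hg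
      have hgbdd : BddBelow (g '' X) := by
        refine ⟨0, ?_⟩
        rintro b ⟨x, hx, rfl⟩
        exact Finset.sum_nonneg fun i _ => (hx01 x hx i).1
      have hfbdd : BddBelow (f '' X) := by
        refine ⟨0, ?_⟩
        rintro b ⟨x, hx, rfl⟩
        refine mul_nonneg hp0.le (Finset.sum_nonneg fun i _ => ?_)
        have : Real.exp (-(x i) * Real.log (1 / p)) ≤ 1 := by
          rw [Real.exp_le_one_iff]
          have := (hx01 x hx i).1
          nlinarith
        linarith
      -- pointwise bounds
      have hlow : ∀ x ∈ X, p * (1 - p) * g x ≤ f x := by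
        intro x hx
        rw [hf, hg]
        simp only
        rw [Finset.mul_sum, Finset.mul_sum]
        refine Finset.sum_le_sum fun i _ => ?_
        obtain ⟨h0, h1⟩ := hx01 x hx i
        have hch := chord_exp (Real.log (1/p)) (x i * Real.log (1/p)) hL
          (mul_nonneg h0 hL.le)
          (by nlinarith)
        have hEL : Real.exp (-(Real.log (1/p))) = p := by
          rw [one_div, Real.log_inv, neg_neg, Real.exp_log hp0]
        rw [hEL] at hch
        have hdiv : x i * Real.log (1/p) / Real.log (1/p) = x i := by
          field_simp
        rw [hdiv] at hch
        have : -(x i * Real.log (1/p)) = -(x i) * Real.log (1/p) := by ring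
        rw [this] at hch
        nlinarith
      have hhigh : ∀ x ∈ X, f x ≤ p * Real.log (1/p) * g x := by
        intro x hx
        rw [hf, hg]
        simp only
        rw [Finset.mul_sum, Finset.mul_sum]
        refine Finset.sum_le_sum fun i _ => ?_
        have h := Real.add_one_le_exp (-(x i) * Real.log (1/p))
        nlinarith [(hx01 x hx i).1]
      constructor
      · rw [hW p]
        refine le_csInf ⟨f x0, Set.mem_image_of_mem f hx0⟩ ?_
        rintro b ⟨x, hx, rfl⟩
        show p * (1 - p) * S ≤ f x
        have hSle : S ≤ g x := csInf_le hgbdd (Set.mem_image_of_mem g hx)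
        have h1 := hlow x hx
        have h2 : p * (1 - p) * S ≤ p * (1 - p) * g x :=
          mul_le_mul_of_nonneg_left hSle (mul_nonneg hp0.le (by linarith))
        linarith
      · rw [hW p]
        have key : sInf (f '' X) / (p * Real.log (1/p)) ≤ S := by
          refine le_csInf ⟨g x0, Set.mem_image_of_mem g hx0⟩ ?_
          rintro b ⟨x, hx, rfl⟩
          show sInf (f '' X) / (p * Real.log (1/p)) ≤ g x
          rw [div_le_iff₀ (by positivity)]
          calc sInf (f '' X) ≤ f x := csInf_le hfbdd (Set.mem_image_of_mem f hx)
            _ ≤ p * Real.log (1/p) * g x := hhigh x hx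
            _ = g x * (p * Real.log (1/p)) := by ring
        rw [div_le_iff₀ (by positivity)] at key
        linarith [key]
    · have hXempty : X = ∅ := Set.not_nonempty_iff_eq_empty.mp hXe
      rw [hW p, hXempty]
      simp [Real.sInf_empty, hSdef, hXempty]
  have hS0 : 0 ≤ S := by
    by_cases hXe : X.Nonempty
    · obtain ⟨x0, hx0⟩ := hXe
      refine le_csInf ⟨∑ i, x0 i, Set.mem_image_of_mem _ hx0⟩ ?_
      rintro b ⟨x, hx, rfl⟩
      exact Finset.sum_nonneg fun i _ => (hx01 x hx i).1
    · rw [hSdef, Set.not_nonempty_iff_eq_empty.mp hXe]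
      simp [Real.sInf_empty]
  have hhalf : (1/4 : ℝ) * S ≤ W (1/2) := by
    have := (hmain (1/2) (by norm_num)).1
    nlinarith
  refine ⟨hmain, hhalf, ?_⟩
  -- third part
  have hsup : sSup (W '' Set.Ioo 0 1) ≤ (Real.exp 1)⁻¹ * S := by
    refine csSup_le ⟨W (1/2), Set.mem_image_of_mem W (by norm_num)⟩ ?_
    rintro b ⟨p, hp, rfl⟩
    have h2 := (hmain p hp).2
    have h3 := plogp_le p hp.1
    have : p * Real.log (1/p) * S ≤ (Real.exp 1)⁻¹ * S :=
      mul_le_mul_of_nonneg_right h3 hS0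
    linarith
  have hpos : (0:ℝ) < Real.exp 1 := Real.exp_pos 1
  calc Real.exp 1 / 4 * sSup (W '' Set.Ioo 0 1)
      ≤ Real.exp 1 / 4 * ((Real.exp 1)⁻¹ * S) :=
        mul_le_mul_of_nonneg_left hsup (by positivity)
    _ = (1/4 : ℝ) * S := by field_simp
end

section
/- Let F(v) = 1 − e^{−v} be the exponential CDF, and n ≥ 2. If T_1,...,T_n > 0 satisfy T_i · ∏_{j≠i} F(T_j) = p for all i (for some p > 0), then T_1 = T_2 = ... = T_n. That is, all equilibria on the complete graph with exponential valuations are symmetric. -/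
/-!
Each equilibrium condition, multiplied by `F (T i)`, reads `T i * ∏ j, F (T j) = p * F (T i)`,
so `F (T i) / T i` is the same for every player. Since `F` is strictly concave with `F 0 = 0`,
`t ↦ F t / t` (the slope of the chord from the origin) is strictly decreasing on `(0, ∞)`,
hence injective there.
-/

open Set Finset

theorem StrictConcaveOn.div_strictAntiOn_Ioi {𝕜 : Type*} [Field 𝕜] [LinearOrder 𝕜]
    [IsStrictOrderedRing 𝕜] {f : 𝕜 → 𝕜} (hf : StrictConcaveOn 𝕜 (Ici 0) f) (h0 : f 0 = 0) :
    StrictAntiOn (fun t => f t / t) (Ioi 0) := fun x hx y hy hxy => by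
  simpa [h0] using hf.secant_strict_mono self_mem_Ici (le_of_lt hx) (le_of_lt hy)
    (ne_of_gt hx) (ne_of_gt hy) hxy

theorem strictConcaveOn_one_sub_exp_neg :
    StrictConcaveOn ℝ univ (fun v => 1 - Real.exp (-v)) := by
  refine ⟨convex_univ, fun x _ y _ hxy a b ha hb hab => ?_⟩
  have hexp := strictConvexOn_exp.2 (mem_univ (-x)) (mem_univ (-y)) (neg_injective.ne hxy)
    ha hb hab
  simp only [smul_eq_mul] at hexp ⊢
  rw [show -(a * x + b * y) = a * -x + b * -y by ring]
  linarith

theorem div_eq_prod_div_of_mul_prod_erase_eq {ι K : Type*} [Fintype ι] [DecidableEq ι] [Field K]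
    {x g : ι → K} {p : K} (hp : p ≠ 0)
    (h : ∀ i, x i * ∏ j ∈ univ.erase i, g j = p) (i : ι) :
    g i / x i = (∏ j, g j) / p := by
  have hprod : ∏ j ∈ univ.erase i, g j ≠ 0 := right_ne_zero_of_mul (h i ▸ hp)
  rw [← mul_prod_erase univ g (mem_univ i), ← h i, mul_div_mul_right _ _ hprod]

theorem stmt_15_general (F : ℝ → ℝ) (hF : ∀ v, F v = 1 - Real.exp (-v))
    (n : ℕ) (p : ℝ) (hp : 0 < p)
    (T : Fin n → ℝ) (hTpos : ∀ i, 0 < T i)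
    (heq : ∀ i, T i * ∏ j ∈ Finset.univ.erase i, F (T j) = p) :
    ∀ i j, T i = T j := by
  have hF_anti : StrictAntiOn (fun t => F t / t) (Ioi 0) := by
    simp only [hF]
    exact (strictConcaveOn_one_sub_exp_neg.subset (subset_univ _) (convex_Ici 0))
      |>.div_strictAntiOn_Ioi (by simp)
  have hratio := div_eq_prod_div_of_mul_prod_erase_eq hp.ne' heq
  intro i j
  exact hF_anti.injOn (hTpos i) (hTpos j) ((hratio i).trans (hratio j).symm)

/-- With exponential valuations, all equilibria on the complete graph are
symmetric. -/
theorem stmt_15 (F : ℝ → ℝ) (hF : ∀ v, F v = 1 - Real.exp (-v))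
    (n : ℕ) (hn : 2 ≤ n) (p : ℝ) (hp : 0 < p)
    (T : Fin n → ℝ) (hTpos : ∀ i, 0 < T i)
    (heq : ∀ i, T i * ∏ j ∈ Finset.univ.erase i, F (T j) = p) :
    ∀ i j, T i = T j :=
  stmt_15_general F hF n p hp T hTpos heq
end

section
/- For F(v) = 1 − e^{−v}, the function g(T) = T·(1−e^{−T})^{m} (for integer m ≥ 1) is strictly increasing on (0,∞), and for all sufficiently large m, g(log m − log log log m) < 1. Consequently, the unique T with g(T) = 1 satisfies T > log m − log log log m. -/
lemma mono_aux (m : ℕ) (hm : 1 ≤ m) :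
    StrictMonoOn (fun T : ℝ => T * (1 - Real.exp (-T)) ^ m) (Set.Ioi 0) := by
  intro a ha b hb hab
  simp only [Set.mem_Ioi] at ha hb
  have h1 : Real.exp (-a) < 1 := Real.exp_lt_one_iff.2 (by linarith)
  have h2 : Real.exp (-b) < Real.exp (-a) := Real.exp_lt_exp.2 (by linarith)
  have hA : (0:ℝ) < 1 - Real.exp (-a) := by linarith
  have hpow : (1 - Real.exp (-a)) ^ m < (1 - Real.exp (-b)) ^ m :=
    pow_lt_pow_left₀ (by linarith) hA.le (by omega)
  have hpos : (0:ℝ) < (1 - Real.exp (-a)) ^ m := pow_pos hA m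
  calc a * (1 - Real.exp (-a)) ^ m < b * (1 - Real.exp (-a)) ^ m := by
        exact mul_lt_mul_of_pos_right hab hpos
    _ < b * (1 - Real.exp (-b)) ^ m := by
        exact mul_lt_mul_of_pos_left hpow hb

/-- Example 14 computation: g(T) = T(1-e^{-T})^m is strictly increasing on
(0,∞), and for all large m, g(log m - log log log m) < 1; hence any root
T of g(T) = 1 satisfies T > log m - log log log m. -/
theorem stmt_16 :
    (∀ m : ℕ, 1 ≤ m →
      StrictMonoOn (fun T : ℝ => T * (1 - Real.exp (-T)) ^ m) (Set.Ioi 0))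
    ∧ ∃ M : ℕ, ∀ m : ℕ, M ≤ m →
        ((Real.log m - Real.log (Real.log (Real.log m))) *
            (1 - Real.exp (-(Real.log m - Real.log (Real.log (Real.log m))))) ^ m
          < 1
        ∧ ∀ T ∈ Set.Ioi (0:ℝ), T * (1 - Real.exp (-T)) ^ m = 1 →
            Real.log m - Real.log (Real.log (Real.log m)) < T) := by
  refine ⟨mono_aux, 21, fun m hm => ?_⟩
  have hm' : (21:ℝ) ≤ (m:ℝ) := by exact_mod_cast hm
  have hmpos : (0:ℝ) < m := by linarith
  have he : Real.exp 1 < 2.7182818286 := Real.exp_one_lt_d9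
  have he1 : (0:ℝ) < Real.exp 1 := Real.exp_pos 1
  have hexp3 : Real.exp 3 < 21 := by
    have : Real.exp 1 ^ 3 < 2.7182818286 ^ 3 := by
      exact pow_lt_pow_left₀ he he1.le (by norm_num)
    have h3 : Real.exp 1 ^ 3 = Real.exp 3 := by
      rw [← Real.exp_nat_mul]; norm_num
    rw [h3] at this
    nlinarith
  have hlogm3 : (3:ℝ) ≤ Real.log m := by
    rw [Real.le_log_iff_exp_le hmpos]; linarith
  have hlogm_pos : (0:ℝ) < Real.log m := by linarith
  have h1ll : (1:ℝ) < Real.log (Real.log m) := by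
    have hlog3 : (1:ℝ) < Real.log 3 := by
      rw [Real.lt_log_iff_exp_lt (by norm_num)]; linarith
    have : Real.log 3 ≤ Real.log (Real.log m) :=
      Real.log_le_log (by norm_num) hlogm3
    linarith
  have hll_pos : (0:ℝ) < Real.log (Real.log m) := by linarith
  have hlll_pos : (0:ℝ) < Real.log (Real.log (Real.log m)) := Real.log_pos h1ll
  set L := Real.log m - Real.log (Real.log (Real.log m)) with hLdef
  have hlll_lt : Real.log (Real.log (Real.log m)) < Real.log m := by
    have h1 := Real.log_le_sub_one_of_pos hll_pos
    have h2 := Real.log_le_sub_one_of_pos hlogm_pos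
    linarith
  have hL : (0:ℝ) < L := by simp [hLdef]; linarith
  set x := Real.log (Real.log m) / m with hxdef
  have hex : Real.exp (-L) = x := by
    rw [hLdef, neg_sub, Real.exp_sub, Real.exp_log hll_pos, Real.exp_log hmpos]
  have hx_pos : 0 < x := div_pos hll_pos hmpos
  have hx_lt1 : x < 1 := by
    rw [hxdef, div_lt_one hmpos]
    have h2 := Real.log_le_sub_one_of_pos hlogm_pos
    have h3 := Real.log_le_sub_one_of_pos hmpos
    linarith
  have h1x : 1 - x ≤ Real.exp (-x) := by
    have := Real.add_one_le_exp (-x); linarith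
  have hmul : (m:ℝ) * x = Real.log (Real.log m) := by
    rw [hxdef]; field_simp
  have hpowle : (1 - x) ^ m ≤ (Real.log m)⁻¹ := by
    have h1 : (1 - x) ^ m ≤ Real.exp (-x) ^ m :=
      pow_le_pow_left₀ (by linarith) h1x m
    have h2 : Real.exp (-x) ^ m = Real.exp ((m:ℝ) * (-x)) := by
      rw [← Real.exp_nat_mul]
    have h3 : (m:ℝ) * (-x) = -Real.log (Real.log m) := by
      rw [mul_neg, hmul]
    rw [h2, h3, Real.exp_neg, Real.exp_log hlogm_pos] at h1
    exact h1
  have hkey : L * (1 - Real.exp (-L)) ^ m < 1 := by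
    rw [hex]
    have h1 : L * (1 - x) ^ m ≤ L * (Real.log m)⁻¹ :=
      mul_le_mul_of_nonneg_left hpowle hL.le
    have h2 : L * (Real.log m)⁻¹ < 1 := by
      rw [mul_inv_lt_iff₀ hlogm_pos, one_mul, hLdef]; linarith
    exact h1.trans_lt h2
  refine ⟨hkey, fun T hT hTeq => ?_⟩
  by_contra h
  push_neg at h
  rcases lt_or_eq_of_le h with h' | h'
  · have := mono_aux m (by omega) hT (Set.mem_Ioi.2 hL) h'
    simp only at this
    rw [hTeq] at this
    linarith
  · rw [← h'] at hkey
    rw [hTeq] at hkey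
    linarith
end

section
/- Let X ⊆ [0,1]^V be the set of feasible vectors for the equilibrium program on a graph G (∑_{j∈N(i)∪{i}} x_j ≥ 1 for all i; ∑_{j∈N(i)∪{i}} x_j > 1 ⟹ x_i = 0). Suppose u is a vertex with two degree-one neighbors w_1, w_2 (leaves attached only to u). Then every x ∈ X satisfies x_u ∈ {0,1}. -/
/-!
Feasibility at a leaf `w` of `u` gives `x w ≥ 1 - x u`, so the closed neighbourhood of `u`,
which contains both leaves, carries at least `2 - x u`. Unless `x u = 1` this exceeds `1`,
and complementarity at `u` forces `x u = 0`.
-/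

namespace SimpleGraph

variable {V : Type*} (G : SimpleGraph V)

theorem adj_of_neighborFinset_eq_singleton {u w : V} [Fintype (G.neighborSet w)]
    (h : G.neighborFinset w = {u}) : G.Adj u w :=
  ((G.mem_neighborFinset w u).1 (h ▸ Finset.mem_singleton_self u)).symm

theorem sum_insert_neighborFinset_of_eq_singleton [DecidableEq V] {M : Type*} [AddCommMonoid M]
    {u w : V} [Fintype (G.neighborSet w)] (h : G.neighborFinset w = {u}) (x : V → M) :
    ∑ j ∈ insert w (G.neighborFinset w), x j = x w + x u := by
  rw [h, Finset.sum_pair (G.adj_of_neighborFinset_eq_singleton h).ne']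

theorem add_add_le_sum_insert_neighborFinset [DecidableEq V] {M : Type*} [AddCommMonoid M]
    [PartialOrder M] [IsOrderedAddMonoid M] {u w₁ w₂ : V} [Fintype (G.neighborSet u)]
    (h₁ : G.Adj u w₁) (h₂ : G.Adj u w₂) (hw : w₁ ≠ w₂) {x : V → M} (hx : ∀ i, 0 ≤ x i) :
    x u + x w₁ + x w₂ ≤ ∑ j ∈ insert u (G.neighborFinset u), x j := by
  have hsub : ({u, w₁, w₂} : Finset V) ⊆ insert u (G.neighborFinset u) := by
    simp [Finset.insert_subset_iff, h₁, h₂]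
  calc x u + x w₁ + x w₂ = ∑ j ∈ ({u, w₁, w₂} : Finset V), x j := by
        rw [Finset.sum_insert (by simp [h₁.ne, h₂.ne]), Finset.sum_pair hw, add_assoc]
    _ ≤ _ := Finset.sum_le_sum_of_subset_of_nonneg hsub fun i _ _ ↦ hx i

end SimpleGraph

/-- Variable-gadget rigidity: if u has two leaf neighbors, then every
feasible x has x_u ∈ {0,1}. -/
theorem stmt_19 {V : Type*} [Fintype V] [DecidableEq V]
    (G : SimpleGraph V) [DecidableRel G.Adj]
    (u w₁ w₂ : V) (hw : w₁ ≠ w₂)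
    (hw₁ : G.neighborFinset w₁ = {u}) (hw₂ : G.neighborFinset w₂ = {u})
    (x : V → ℝ) (hx01 : ∀ i, x i ∈ Set.Icc (0:ℝ) 1)
    (hfeas : ∀ i, 1 ≤ ∑ j ∈ insert i (G.neighborFinset i), x j)
    (hcomp : ∀ i, 1 < ∑ j ∈ insert i (G.neighborFinset i), x j → x i = 0) :
    x u = 0 ∨ x u = 1 := by
  have leaf₁ : 1 ≤ x w₁ + x u := G.sum_insert_neighborFinset_of_eq_singleton hw₁ x ▸ hfeas w₁
  have leaf₂ : 1 ≤ x w₂ + x u := G.sum_insert_neighborFinset_of_eq_singleton hw₂ x ▸ hfeas w₂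
  have hu : x u + x w₁ + x w₂ ≤ ∑ j ∈ insert u (G.neighborFinset u), x j :=
    G.add_add_le_sum_insert_neighborFinset (G.adj_of_neighborFinset_eq_singleton hw₁)
      (G.adj_of_neighborFinset_eq_singleton hw₂) hw fun i ↦ (hx01 i).1
  rcases (hx01 u).2.lt_or_eq with hlt | heq
  · exact Or.inl <| hcomp u <| by linarith
  · exact Or.inr heq
end
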